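/- Under the hard-instance construction of the SVM lower bound, the sensitivity of every point p satisfies s(p) ≥ (d²/(8n) + λ)/(d²/8 + λ), and consequently Σ_{p∈P} s(p) ≥ (d²/8 + nλ)/(d²/8 + λ). -/

import Mathlib

/-!
Test the sensitivity of `S` against the classifier `w_S` that is `√(d/2)` on the coordinates
outside `S` and `0` elsewhere (including the bias coordinate). Its squared norm is
`(d/2)·(d/2) = d²/4`, and its margin on the point `Q` is `#(Q \ S)`, which is `0` for `Q = S` and
at least `1` for every other half-size `Q`. So `S` is the only point with nonzero hinge loss,
`F(w_S) = d²/8 + λ` and `f(S, w_S) = d²/(8n) + λ`; summing the `n` equal lower bounds gives the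
second claim.
-/

/-- The hard instance point: among the first `d` coordinates, those indexed by `S`
equal `y * √(2/d)`, the rest are `0`, and the `(d+1)`-th coordinate equals `1`. -/
noncomputable def hardPoint (d : ℕ) (S : Finset (Fin d)) (y : ℝ) : Fin (d + 1) → ℝ :=
  fun i => if h : (i : ℕ) < d then (if (⟨i, h⟩ : Fin d) ∈ S then y * Real.sqrt (2 / d) else 0)
    else 1

open Finset

lemma hardPoint_castSucc (d : ℕ) (S : Finset (Fin d)) (y : ℝ) (i : Fin d) :
    hardPoint d S y i.castSucc = if i ∈ S then y * √(2 / d) else 0 := by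
  simp [hardPoint]

noncomputable def hardWitness (d : ℕ) (S : Finset (Fin d)) : Fin (d + 1) → ℝ :=
  Fin.snoc (fun i => if i ∈ S then 0 else √(d / 2)) 0

lemma hardWitness_castSucc (d : ℕ) (S : Finset (Fin d)) (i : Fin d) :
    hardWitness d S i.castSucc = if i ∈ S then 0 else √(d / 2) :=
  Fin.snoc_castSucc ..

lemma hardWitness_last (d : ℕ) (S : Finset (Fin d)) : hardWitness d S (Fin.last d) = 0 :=
  Fin.snoc_last ..

lemma sum_sq_hardWitness {d : ℕ} (hd : Even d) {S : Finset (Fin d)} (hS : #S = d / 2) :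
    ∑ i : Fin d, hardWitness d S i.castSucc ^ 2 = (d : ℝ) ^ 2 / 4 := by
  obtain ⟨m, rfl⟩ := hd
  have hSc : #Sᶜ = m := by rw [card_compl, Fintype.card_fin, hS]; omega
  have hsq : √((↑(m + m) : ℝ) / 2) ^ 2 = m := by
    rw [Real.sq_sqrt (by positivity)]; push_cast; ring
  simp only [hardWitness_castSucc, ite_pow, hsq, ne_eq, OfNat.ofNat_ne_zero, not_false_eq_true,
    zero_pow, sum_ite, sum_const_zero, zero_add, sum_const, filter_not, filter_mem_eq_inter,
    univ_inter, ← compl_eq_univ_sdiff, hSc, nsmul_eq_mul]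
  push_cast; ring

lemma hardPoint_inner_hardWitness (d : ℕ) (Q S : Finset (Fin d)) (y : ℝ) :
    ∑ i, hardPoint d Q y i * hardWitness d S i = y * #(Q \ S) := by
  have hterm (i : Fin d) : hardPoint d Q y i.castSucc * hardWitness d S i.castSucc =
      if i ∈ Q \ S then y else 0 := by
    have hd : (d : ℝ) ≠ 0 := by have := i.pos; positivity
    have hsqrt : √(2 / d) * √(d / 2) = 1 := by
      rw [← Real.sqrt_mul (by positivity), show 2 / (d : ℝ) * (d / 2) = 1 by field_simp,
        Real.sqrt_one]
    rw [hardPoint_castSucc, hardWitness_castSucc]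
    by_cases hQ : i ∈ Q <;> by_cases hS : i ∈ S <;>
      simp only [hQ, hS, mem_sdiff, not_true_eq_false, not_false_eq_true, and_self, and_true,
        and_false, if_true, if_false, mul_zero, zero_mul, mul_assoc, hsqrt, mul_one]
  rw [Fin.sum_univ_castSucc, hardWitness_last, mul_zero, add_zero,
    sum_congr rfl fun i _ => hterm i, sum_ite_mem, univ_inter, sum_const, nsmul_eq_mul, mul_comm]

lemma hinge_hardPoint_hardWitness {d : ℕ} {Q S : Finset (Fin d)} {y : ℝ} (hy : y = 1 ∨ y = -1)
    (hQS : #Q = #S) :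
    max (1 - y * ∑ i, hardPoint d Q y i * hardWitness d S i) 0 = if Q = S then 1 else 0 := by
  have hyy : y * y = 1 := by rcases hy with rfl | rfl <;> norm_num
  rw [hardPoint_inner_hardWitness, ← mul_assoc, hyy, one_mul]
  split_ifs with h
  · simp [h]
  · have hne : (Q \ S).Nonempty :=
      sdiff_nonempty.2 fun hsub => h (eq_of_subset_of_card_le hsub hQS.ge)
    have : (1 : ℝ) ≤ #(Q \ S) := by exact_mod_cast hne.card_pos
    exact max_eq_right (by linarith)

theorem sensitivity_lower_bound_general (d : ℕ) (hdEven : Even d)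
    (lam : ℝ) (hlam0 : 0 < lam)
    (yl : Finset (Fin d) → ℝ) (hyl : ∀ S, yl S = 1 ∨ yl S = -1)
    (n : ℕ) (hn : n = Nat.choose d (d / 2))
    (f : Finset (Fin d) → (Fin (d + 1) → ℝ) → ℝ)
    (hf : ∀ S w, f S w = (∑ i : Fin d, (w i.castSucc) ^ 2) / (2 * n) +
      lam * max (1 - yl S * ∑ i, hardPoint d S (yl S) i * w i) 0)
    (F : (Fin (d + 1) → ℝ) → ℝ)
    (hF : ∀ w, F w = ∑ S ∈ Finset.univ.filter (fun S : Finset (Fin d) => S.card = d / 2), f S w)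
    (s : Finset (Fin d) → ℝ)
    (hs : ∀ S, S.card = d / 2 → ∀ w, F w ≠ 0 → f S w / F w ≤ s S) :
    (∀ S : Finset (Fin d), S.card = d / 2 →
      ((d : ℝ) ^ 2 / (8 * n) + lam) / ((d : ℝ) ^ 2 / 8 + lam) ≤ s S) ∧
    ((d : ℝ) ^ 2 / 8 + n * lam) / ((d : ℝ) ^ 2 / 8 + lam) ≤
      ∑ S ∈ Finset.univ.filter (fun S : Finset (Fin d) => S.card = d / 2), s S := by
  set P := univ.filter fun S : Finset (Fin d) => #S = d / 2
  have hcardP : #P = n := by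
    have : P = powersetCard (d / 2) univ := by ext; simp [P]
    rw [hn, this, card_powersetCard, card_univ, Fintype.card_fin]
  have hn0 : (n : ℝ) ≠ 0 := by
    rw [hn]; exact_mod_cast (Nat.choose_pos (Nat.div_le_self d 2)).ne'
  have key (S : Finset (Fin d)) (hS : #S = d / 2) :
      ((d : ℝ) ^ 2 / (8 * n) + lam) / ((d : ℝ) ^ 2 / 8 + lam) ≤ s S := by
    have hfQ : ∀ Q ∈ P, f Q (hardWitness d S) = d ^ 2 / (8 * n) + if Q = S then lam else 0 := by
      intro Q hQ
      rw [hf, sum_sq_hardWitness hdEven hS,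
        hinge_hardPoint_hardWitness (hyl Q) ((mem_filter.1 hQ).2.trans hS.symm)]
      split_ifs <;> ring
    have hFw : F (hardWitness d S) = d ^ 2 / 8 + lam := by
      rw [hF, sum_congr rfl hfQ, sum_add_distrib, sum_const, hcardP, sum_ite_eq' P S,
        if_pos (by simpa [P] using hS), nsmul_eq_mul]
      field_simp
    calc _ = f S (hardWitness d S) / F (hardWitness d S) := by
          rw [hfQ S (by simpa [P] using hS), if_pos rfl, hFw]
      _ ≤ s S := hs S hS _ (by rw [hFw]; positivity)
  refine ⟨key, ?_⟩
  calc _ = #P • (((d : ℝ) ^ 2 / (8 * n) + lam) / ((d : ℝ) ^ 2 / 8 + lam)) := by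
        rw [hcardP, nsmul_eq_mul]; field_simp
    _ ≤ _ := card_nsmul_le_sum P s _ fun S hS => key S (mem_filter.1 hS).2

theorem sensitivity_lower_bound (d : ℕ) (hd2 : 2 ≤ d) (hdEven : Even d)
    (lam : ℝ) (hlam0 : 0 < lam) (hlam1 : lam ≤ 1)
    (yl : Finset (Fin d) → ℝ) (hyl : ∀ S, yl S = 1 ∨ yl S = -1)
    (n : ℕ) (hn : n = Nat.choose d (d / 2))
    (f : Finset (Fin d) → (Fin (d + 1) → ℝ) → ℝ)
    (hf : ∀ S w, f S w = (∑ i : Fin d, (w i.castSucc) ^ 2) / (2 * n) +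
      lam * max (1 - yl S * ∑ i, hardPoint d S (yl S) i * w i) 0)
    (F : (Fin (d + 1) → ℝ) → ℝ)
    (hF : ∀ w, F w = ∑ S ∈ Finset.univ.filter (fun S : Finset (Fin d) => S.card = d / 2), f S w)
    (s : Finset (Fin d) → ℝ)
    (hs : ∀ S, S.card = d / 2 → ∀ w, F w ≠ 0 → f S w / F w ≤ s S) :
    (∀ S : Finset (Fin d), S.card = d / 2 →
      ((d : ℝ) ^ 2 / (8 * n) + lam) / ((d : ℝ) ^ 2 / 8 + lam) ≤ s S) ∧
    ((d : ℝ) ^ 2 / 8 + n * lam) / ((d : ℝ) ^ 2 / 8 + lam) ≤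
      ∑ S ∈ Finset.univ.filter (fun S : Finset (Fin d) => S.card = d / 2), s S :=
  sensitivity_lower_bound_general d hdEven lam hlam0 yl hyl n hn f hf F hF s hs
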